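/- arXiv:2412.04890 — 2 statements merged into one kernel-verified Lean document; each statement's English description precedes it below -/
import Mathlib

section
/- Let L = |u|·det(u,a,b)/|u×a|² with u,a,b ∈ ℝ³, u×a ≠ 0. Then for each j, ∂L/∂b^j = (|u|/|u×a|²)(u×a)_j, and these partial derivatives admit a potential in a: there is a function λ(u,a) (namely λ = arctan[(a₁|u|² − ⟨u,a⟩u₁)/(|u|(u₂a₃ − u₃a₂))] on the domain where defined) with ∂λ/∂a^s = (|u|/|u×a|²)(u×a)_s. -/
/-!
With `w = u × a`, the argument of the arctangent in `λ` is `⟨w × û, e₁⟩ / ⟨w, e₁⟩`, so `λ` is, up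
to a multiple of `π`, the angle through which `w` turns about the axis `u`. Since `dw = u × da`, this
angle changes by `⟨û × w, u × da⟩ / |w|² = |u| ⟨w, da⟩ / |w|²` (Binet–Cauchy, with `⟨u, w⟩ = 0`).
The Lagrangian is linear in `b` with coefficient vector `|u| w / |w|²`.
-/

open scoped BigOperators

noncomputable section

def dot (u v : Fin 3 → ℝ) : ℝ := ∑ k, u k * v k

def cross (u v : Fin 3 → ℝ) : Fin 3 → ℝ :=
  ![u 1 * v 2 - u 2 * v 1, u 2 * v 0 - u 0 * v 2, u 0 * v 1 - u 1 * v 0]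

/-- The Lagrangian `L = |u|·⟨u×a,b⟩/|u×a|²` as a function of `(u,a,b)`. -/
def Lcg (u a b : Fin 3 → ℝ) : ℝ :=
  Real.sqrt (dot u u) * dot (cross u a) b / dot (cross u a) (cross u a)

/-- The potential `λ(u,a) = arctan[(a₁|u|² − ⟨u,a⟩u₁)/(|u|(u₂a₃ − u₃a₂))]`
(indices 1,2,3 are `0,1,2` here). -/
def lampot (u a : Fin 3 → ℝ) : ℝ :=
  Real.arctan ((a 0 * dot u u - dot u a * u 0) /
    (Real.sqrt (dot u u) * (u 1 * a 2 - u 2 * a 1)))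

open Matrix Real

section DotProduct

variable {ι : Type*} [Fintype ι]

def dotProductCLM (w : ι → ℝ) : (ι → ℝ) →L[ℝ] ℝ :=
  LinearMap.toContinuousLinearMap (dotProductBilin ℝ ℝ w)

@[simp]
theorem dotProductCLM_apply (w v : ι → ℝ) : dotProductCLM w v = w ⬝ᵥ v := rfl

end DotProduct

theorem hasFDerivAt_arctan_div {E : Type*} [NormedAddCommGroup E] [NormedSpace ℝ E]
    (N D : E →L[ℝ] ℝ) {x : E} (hx : D x ≠ 0) :
    HasFDerivAt (fun y => arctan (N y / D y))
      ((D x ^ 2 + N x ^ 2)⁻¹ • (D x • N - N x • D)) x := by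
  have hinv := (hasDerivAt_inv hx).comp_hasFDerivAt x D.hasFDerivAt
  convert (N.hasFDerivAt.mul hinv).arctan using 1
  · simp [div_eq_mul_inv]
  · ext v
    simp
    field_simp
    ring

theorem dot_eq_dotProduct (u v : Fin 3 → ℝ) : dot u v = u ⬝ᵥ v := rfl

theorem Lcg_eq_dotProductCLM (u a : Fin 3 → ℝ) :
    Lcg u a = dotProductCLM ((√(dot u u) / dot (cross u a) (cross u a)) • cross u a) := by
  ext b
  simp only [Lcg, dotProductCLM_apply, smul_dotProduct, smul_eq_mul, dot_eq_dotProduct]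
  ring

-- Coefficient vectors of the numerator `((u × a) × u)₁` and denominator `|u| (u × a)₁` of the
-- argument of `λ`, both linear in `a`.
def lampotNum (u : Fin 3 → ℝ) : Fin 3 → ℝ := dot u u • Pi.single 0 1 - u 0 • u

def lampotDen (u : Fin 3 → ℝ) : Fin 3 → ℝ := √(dot u u) • cross (Pi.single 0 1) u

theorem lampotNum_dotProduct (u a : Fin 3 → ℝ) :
    lampotNum u ⬝ᵥ a = a 0 * dot u u - dot u a * u 0 := by
  simp only [lampotNum, sub_dotProduct, smul_dotProduct, single_one_dotProduct, smul_eq_mul,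
    dot_eq_dotProduct]
  ring

theorem lampotDen_dotProduct (u a : Fin 3 → ℝ) :
    lampotDen u ⬝ᵥ a = √(dot u u) * cross u a 0 := by
  simp [lampotDen, cross, dotProduct, Fin.sum_univ_three]
  ring

theorem lampot_eq_arctan_div (u : Fin 3 → ℝ) :
    lampot u =
      fun a => arctan (dotProductCLM (lampotNum u) a / dotProductCLM (lampotDen u) a) := by
  funext a
  rw [lampot, dotProductCLM_apply, dotProductCLM_apply, lampotNum_dotProduct,
    lampotDen_dotProduct]
  rfl

-- `(D ∂ₛN − N ∂ₛD) |w|² = |u| wₛ (D² + N²)` with the factor `|u|` cleared, where `N / D` is the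
-- argument of `λ`.
theorem lampot_wronskian (u a : Fin 3 → ℝ) (s : Fin 3) :
    (cross u a 0 * lampotNum u s - lampotNum u ⬝ᵥ a * cross (Pi.single 0 1) u s) *
        dot (cross u a) (cross u a) =
      cross u a s * (dot u u * cross u a 0 ^ 2 + (lampotNum u ⬝ᵥ a) ^ 2) := by
  rw [lampotNum_dotProduct]
  fin_cases s <;> simp [lampotNum, cross, dot, Fin.sum_univ_three] <;> ring

theorem fderiv_Lcg_apply_single (u a b : Fin 3 → ℝ) (j : Fin 3) :
    fderiv ℝ (Lcg u a) b (Pi.single j 1)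
      = √(dot u u) / dot (cross u a) (cross u a) * cross u a j := by
  rw [Lcg_eq_dotProductCLM, ContinuousLinearMap.fderiv, dotProductCLM_apply,
    dotProduct_single_one, Pi.smul_apply, smul_eq_mul]

theorem fderiv_lampot_apply_single (u a : Fin 3 → ℝ) (hw0 : cross u a 0 ≠ 0) (s : Fin 3) :
    fderiv ℝ (lampot u) a (Pi.single s 1)
      = √(dot u u) / dot (cross u a) (cross u a) * cross u a s := by
  have hu : u ≠ 0 := by rintro rfl; simp [cross] at hw0
  have hu2 : 0 < dot u u :=
    lt_of_le_of_ne' (Finset.sum_nonneg fun i _ => mul_self_nonneg (u i))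
      (dotProduct_self_eq_zero.not.2 hu)
  have hr : √(dot u u) ≠ 0 := sqrt_ne_zero'.2 hu2
  have hw : dot (cross u a) (cross u a) ≠ 0 :=
    dotProduct_self_eq_zero.not.2 fun h => hw0 (congr_fun h 0)
  have hD : lampotDen u ⬝ᵥ a ≠ 0 := by
    rw [lampotDen_dotProduct]
    exact mul_ne_zero hr hw0
  rw [lampot_eq_arctan_div,
    (hasFDerivAt_arctan_div (dotProductCLM (lampotNum u)) (dotProductCLM (lampotDen u))
      (x := a) hD).fderiv]
  have key := lampot_wronskian u a s
  have hrr : √(dot u u) ^ 2 = dot u u := sq_sqrt hu2.le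
  simp only [_root_.smul_apply, _root_.sub_apply, dotProductCLM_apply, dotProduct_single_one,
    smul_eq_mul, lampotDen_dotProduct]
  simp only [lampotDen, Pi.smul_apply, smul_eq_mul]
  have hsum : (√(dot u u) * cross u a 0) ^ 2 + (lampotNum u ⬝ᵥ a) ^ 2 ≠ 0 := by positivity
  field_simp
  linear_combination key - cross u a s * cross u a 0 ^ 2 * hrr

theorem dLdb_has_potential_general (u a b : Fin 3 → ℝ)
    (hdenom : u 1 * a 2 - u 2 * a 1 ≠ 0) :
    (∀ j, fderiv ℝ (fun b' => Lcg u a b') b (Pi.single j 1)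
        = Real.sqrt (dot u u) / dot (cross u a) (cross u a) * cross u a j) ∧
    (∀ s, fderiv ℝ (fun a' => lampot u a') a (Pi.single s 1)
        = Real.sqrt (dot u u) / dot (cross u a) (cross u a) * cross u a s) :=
  ⟨fderiv_Lcg_apply_single u a b, fderiv_lampot_apply_single u a hdenom⟩

/-- `∂L/∂b^j = (|u|/|u×a|²)(u×a)_j`, and these partial derivatives admit
the potential `λ` in the `a`-variables: `∂λ/∂a^s = (|u|/|u×a|²)(u×a)_s`, on the open set
where `u ≠ 0`, `u×a ≠ 0` and `u₂a₃ − u₃a₂ ≠ 0`. -/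
theorem dLdb_has_potential (u a b : Fin 3 → ℝ)
    (hu : u ≠ 0) (hca : cross u a ≠ 0) (hdenom : u 1 * a 2 - u 2 * a 1 ≠ 0) :
    (∀ j, fderiv ℝ (fun b' => Lcg u a b') b (Pi.single j 1)
        = Real.sqrt (dot u u) / dot (cross u a) (cross u a) * cross u a j) ∧
    (∀ s, fderiv ℝ (fun a' => lampot u a') a (Pi.single s 1)
        = Real.sqrt (dot u u) / dot (cross u a) (cross u a) * cross u a s) :=
  dLdb_has_potential_general u a b hdenom
end
end

section
/- Let L(x,ẋ,ẍ,x⃛) be affine in x⃛ with coefficients λ_s = ∂L/∂x⃛^s depending only on (x,ẋ,ẍ), and assume the symmetry ∂λ_s/∂ẍ^i = ∂λ_i/∂ẍ^s. Then the Euler–Lagrange expression δL/δx^k, after restriction to third-order jets, is a polynomial of degree at most 2 in the third derivatives x⃛; i.e., its third partial derivatives with respect to the x⃛-variables vanish. -/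
open scoped BigOperators

noncomputable section

variable {n : ℕ}

/-- Third-order jet space of curves in `ℝⁿ`. -/
abbrev Jet (n : ℕ) := (Fin n → ℝ) × (Fin n → ℝ) × (Fin n → ℝ) × (Fin n → ℝ)

def pd0 (L : Jet n → ℝ) (q : Jet n) (i : Fin n) : ℝ :=
  fderiv ℝ L q (Pi.single i 1, 0, 0, 0)

def pd1 (L : Jet n → ℝ) (q : Jet n) (i : Fin n) : ℝ :=
  fderiv ℝ L q (0, Pi.single i 1, 0, 0)

def pd2 (L : Jet n → ℝ) (q : Jet n) (i : Fin n) : ℝ :=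
  fderiv ℝ L q (0, 0, Pi.single i 1, 0)

def pd3 (L : Jet n → ℝ) (q : Jet n) (i : Fin n) : ℝ :=
  fderiv ℝ L q (0, 0, 0, Pi.single i 1)

/-- The truncated total derivative `D_t = ẋ·∂_x + ẍ·∂_ẋ + x⃛·∂_ẍ` on third-order jets. -/
def Dt (f : Jet n → ℝ) : Jet n → ℝ := fun q =>
  fderiv ℝ f q (q.2.1, q.2.2.1, q.2.2.2, 0)

/-- The Euler–Lagrange expression restricted to third-order jets, using the truncated
total derivative. -/
def ELop (L : Jet n → ℝ) (q : Jet n) (k : Fin n) : ℝ :=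
  pd0 L q k - Dt (fun p => pd1 L p k) q + Dt (Dt (fun p => pd2 L p k)) q
    - Dt (Dt (Dt (fun p => pd3 L p k))) q

namespace ELQ
section generic
variable {E : Type*} [NormedAddCommGroup E] [NormedSpace ℝ E]

def dd (w : E) (f : E → ℝ) : E → ℝ := fun q => fderiv ℝ f q w

abbrev Sm (f : E → ℝ) : Prop := ContDiff ℝ (⊤ : ℕ∞) f

lemma Sm.dd {f : E → ℝ} (hf : Sm f) (w : E) : Sm (ELQ.dd w f) :=
  (hf.fderiv_right (by simp)).clm_apply contDiff_const

lemma Sm.diffAt {f : E → ℝ} (hf : Sm f) (x : E) : DifferentiableAt ℝ f x :=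
  (hf.differentiable (by simp)).differentiableAt

lemma dd_eq_snd {f : E → ℝ} (hf : Sm f) (u w : E) (x : E) :
    dd u (dd w f) x = fderiv ℝ (fderiv ℝ f) x u w := by
  have hd : DifferentiableAt ℝ (fderiv ℝ f) x :=
    ((hf.fderiv_right (m := (⊤ : ℕ∞)) (by simp)).differentiable (by simp)).differentiableAt
  show fderiv ℝ (fun y => fderiv ℝ f y w) x u = _
  rw [fderiv_clm_apply hd (differentiableAt_const w)]
  simp

lemma dd_swap {f : E → ℝ} (hf : Sm f) (u w : E) : dd u (dd w f) = dd w (dd u f) := by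
  funext x
  rw [dd_eq_snd hf, dd_eq_snd hf]
  exact (hf.contDiffAt.isSymmSndFDerivAt (by rw [minSmoothness_of_isRCLikeNormedField]; exact WithTop.coe_le_coe.mpr le_top)).eq u w

lemma dd_add {f g : E → ℝ} (hf : Sm f) (hg : Sm g) (w : E) :
    dd w (fun x => f x + g x) = fun x => dd w f x + dd w g x := by
  funext x
  show fderiv ℝ (fun x => f x + g x) x w = _
  rw [fderiv_fun_add (hf.diffAt x) (hg.diffAt x)]; rfl

lemma dd_add3 {f1 f2 f3 : E → ℝ} (h1 : Sm f1) (h2 : Sm f2) (h3 : Sm f3) (w : E) :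
    dd w (fun x => f1 x + f2 x + f3 x)
      = fun x => dd w f1 x + dd w f2 x + dd w f3 x := by
  funext x
  have h := (((h1.diffAt x).hasFDerivAt.add
    (h2.diffAt x).hasFDerivAt).add (h3.diffAt x).hasFDerivAt).fderiv
  show fderiv ℝ (fun x => f1 x + f2 x + f3 x) x w = _
  exact congrArg (fun L : E →L[ℝ] ℝ => L w) h

lemma dd_add6 {f1 f2 f3 f4 f5 f6 : E → ℝ} (h1 : Sm f1) (h2 : Sm f2) (h3 : Sm f3)
    (h4 : Sm f4) (h5 : Sm f5) (h6 : Sm f6) (w : E) :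
    dd w (fun x => f1 x + f2 x + f3 x + f4 x + f5 x + f6 x)
      = fun x => dd w f1 x + dd w f2 x + dd w f3 x + dd w f4 x + dd w f5 x + dd w f6 x := by
  funext x
  have h := ((((((h1.diffAt x).hasFDerivAt.add
    (h2.diffAt x).hasFDerivAt).add (h3.diffAt x).hasFDerivAt).add
    (h4.diffAt x).hasFDerivAt).add (h5.diffAt x).hasFDerivAt).add
    (h6.diffAt x).hasFDerivAt).fderiv
  show fderiv ℝ (fun x => f1 x + f2 x + f3 x + f4 x + f5 x + f6 x) x w = _
  exact congrArg (fun L : E →L[ℝ] ℝ => L w) h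

lemma dd_comb4 {f1 f2 f3 f4 : E → ℝ} (h1 : Sm f1) (h2 : Sm f2) (h3 : Sm f3)
    (h4 : Sm f4) (w : E) :
    dd w (fun x => f1 x - f2 x + f3 x - f4 x)
      = fun x => dd w f1 x - dd w f2 x + dd w f3 x - dd w f4 x := by
  funext x
  have h := ((((h1.diffAt x).hasFDerivAt.sub
    (h2.diffAt x).hasFDerivAt).add (h3.diffAt x).hasFDerivAt).sub
    (h4.diffAt x).hasFDerivAt).fderiv
  show fderiv ℝ (fun x => f1 x - f2 x + f3 x - f4 x) x w = _
  exact congrArg (fun L : E →L[ℝ] ℝ => L w) h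

lemma dd_zero_fun (w : E) : dd w (fun _ => (0:ℝ)) = fun _ => (0:ℝ) := by
  funext x; show fderiv ℝ (fun _ => (0:ℝ)) x w = 0; rw [fderiv_fun_const]; rfl

lemma dd_zero_dir (f : E → ℝ) : dd (0 : E) f = fun _ => (0:ℝ) := by
  funext x; exact (fderiv ℝ f x).map_zero

end generic

section jet
variable {n : ℕ}

abbrev Tri (n : ℕ) := (Fin n → ℝ) × (Fin n → ℝ) × (Fin n → ℝ)

def c2 : Jet n →L[ℝ] (Fin n → ℝ) :=
  (ContinuousLinearMap.fst ℝ _ _).comp (ContinuousLinearMap.snd ℝ _ _)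
def c3 : Jet n →L[ℝ] (Fin n → ℝ) :=
  (ContinuousLinearMap.fst ℝ _ _).comp
    ((ContinuousLinearMap.snd ℝ _ _).comp (ContinuousLinearMap.snd ℝ _ _))
def c4 : Jet n →L[ℝ] (Fin n → ℝ) :=
  (ContinuousLinearMap.snd ℝ _ _).comp
    ((ContinuousLinearMap.snd ℝ _ _).comp (ContinuousLinearMap.snd ℝ _ _))

def P : Jet n →L[ℝ] Tri n :=
  (ContinuousLinearMap.fst ℝ _ _).prod (c2.prod c3)
def piL : Jet n →L[ℝ] Jet n := c2.prod (c3.prod (c4.prod 0))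

def lift (g : Tri n → ℝ) : Jet n → ℝ := fun q => g (P q)

lemma Sm.lift {g : Tri n → ℝ} (hg : Sm g) : Sm (ELQ.lift g) :=
  hg.comp (P : Jet n →L[ℝ] Tri n).contDiff

lemma Sm.Dt {f : Jet n → ℝ} (hf : Sm f) : Sm (_root_.Dt f) := by
  have : _root_.Dt f = fun q => (fderiv ℝ f q) (piL q) := rfl
  rw [this]
  exact (hf.fderiv_right (by simp)).clm_apply (piL.contDiff)

lemma Dt_zero_fun : _root_.Dt (fun _ => (0:ℝ)) = fun _ : Jet n => (0:ℝ) := by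
  funext q; show fderiv ℝ (fun _ => (0:ℝ)) q _ = 0; rw [fderiv_fun_const]; rfl

lemma Dt_add {f g : Jet n → ℝ} (hf : Sm f) (hg : Sm g) :
    _root_.Dt (fun q => f q + g q) = fun q => _root_.Dt f q + _root_.Dt g q := by
  funext q
  show fderiv ℝ (fun q => f q + g q) q _ = _
  rw [fderiv_fun_add (hf.diffAt q) (hg.diffAt q)]; rfl

lemma dd_Dt {f : Jet n → ℝ} (hf : Sm f) (w : Jet n) :
    dd w (_root_.Dt f) = fun q => _root_.Dt (dd w f) q + dd (piL w) f q := by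
  funext q
  have hd : DifferentiableAt ℝ (fderiv ℝ f) q :=
    ((hf.fderiv_right (m := (⊤ : ℕ∞)) (by simp)).differentiable (by simp)).differentiableAt
  have h1 : _root_.Dt f = fun p => (fderiv ℝ f p) (piL p) := rfl
  show fderiv ℝ (_root_.Dt f) q w = _
  rw [h1, fderiv_clm_apply hd (piL.differentiableAt)]
  have h2 : _root_.Dt (dd w f) q = fderiv ℝ (fderiv ℝ f) q (piL q) w := by
    show dd (piL q) (dd w f) q = _
    exact dd_eq_snd hf _ _ _
  have h3 : fderiv ℝ (fderiv ℝ f) q w (piL q)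
      = fderiv ℝ (fderiv ℝ f) q (piL q) w :=
    (hf.contDiffAt.isSymmSndFDerivAt (by rw [minSmoothness_of_isRCLikeNormedField]; exact WithTop.coe_le_coe.mpr le_top)).eq w (piL q)
  simp only [ContinuousLinearMap.add_apply, ContinuousLinearMap.coe_comp',
    Function.comp_apply, ContinuousLinearMap.flip_apply, ContinuousLinearMap.fderiv]
  rw [h2, ← h3]
  exact add_comm _ _

lemma dd_lift {g : Tri n → ℝ} (hg : Sm g) (w : Jet n) :
    dd w (ELQ.lift g) = ELQ.lift (dd (P w) g) := by
  funext q
  show fderiv ℝ (g ∘ (P : Jet n →L[ℝ] Tri n)) q w = fderiv ℝ g (P q) (P w)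
  rw [fderiv_comp q (hg.diffAt _) (P.differentiableAt), P.fderiv]
  rfl

def ed (i : Fin n) : Jet n := (0,0,0,Pi.single i 1)
def ad (i : Fin n) : Jet n := (0,0,Pi.single i 1,0)
def vd (i : Fin n) : Jet n := (0,Pi.single i 1,0,0)
def xd (i : Fin n) : Jet n := (Pi.single i 1,0,0,0)
def ia (i : Fin n) : Tri n := (0,0,Pi.single i 1)

lemma piL_ed (i : Fin n) : piL (ed i) = ad i := rfl
lemma P_ed (i : Fin n) : P (ed i) = (0 : Tri n) := rfl
lemma P_ad (i : Fin n) : P (ad i) = ia i := rfl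

lemma dd_ed_lift {g : Tri n → ℝ} (hg : Sm g) (m : Fin n) :
    dd (ed m) (ELQ.lift g) = fun _ => (0:ℝ) := by
  rw [dd_lift hg, P_ed, dd_zero_dir]; rfl

lemma dd_ad_lift {g : Tri n → ℝ} (hg : Sm g) (m : Fin n) :
    dd (ad m) (ELQ.lift g) = ELQ.lift (dd (ia m) g) := by
  rw [dd_lift hg, P_ad]

lemma P2 {g : Tri n → ℝ} (hg : Sm g) (m : Fin n) :
    dd (ed m) (_root_.Dt (ELQ.lift g)) = ELQ.lift (dd (ia m) g) := by
  rw [dd_Dt hg.lift, piL_ed, dd_ed_lift hg, Dt_zero_fun, dd_ad_lift hg]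
  funext q; simp

def cp (s : Fin n) : Jet n →L[ℝ] ℝ := (ContinuousLinearMap.proj s).comp c4

def Lam (lam : (Fin n → ℝ) → (Fin n → ℝ) → (Fin n → ℝ) → Fin n → ℝ) (s : Fin n) :
    Tri n → ℝ := fun p => lam p.1 p.2.1 p.2.2 s

lemma fderiv_restrict {f : Jet n → ℝ} (hf : Sm f) (x v a b u : Fin n → ℝ) :
    fderiv ℝ (fun b' => f (x, v, a, b')) b u = fderiv ℝ f (x, v, a, b) (0, 0, 0, u) := by
  have he : HasFDerivAt (fun b' : Fin n → ℝ => ((x, v, a, b') : Jet n))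
      ((0 : (Fin n → ℝ) →L[ℝ] (Fin n → ℝ)).prod
        ((0 : (Fin n → ℝ) →L[ℝ] (Fin n → ℝ)).prod
          ((0 : (Fin n → ℝ) →L[ℝ] (Fin n → ℝ)).prod (ContinuousLinearMap.id ℝ _)))) b :=
    HasFDerivAt.prodMk (hasFDerivAt_const x b) (HasFDerivAt.prodMk (hasFDerivAt_const v b)
      (HasFDerivAt.prodMk (hasFDerivAt_const a b) (hasFDerivAt_id b)))
  have h2 : HasFDerivAt (fun b' : Fin n → ℝ => f (x, v, a, b'))
      ((fderiv ℝ f (x, v, a, b)).comp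
        ((0 : (Fin n → ℝ) →L[ℝ] (Fin n → ℝ)).prod
          ((0 : (Fin n → ℝ) →L[ℝ] (Fin n → ℝ)).prod
            ((0 : (Fin n → ℝ) →L[ℝ] (Fin n → ℝ)).prod (ContinuousLinearMap.id ℝ _))))) b :=
    (hf.diffAt _).hasFDerivAt.comp b he
  rw [h2.fderiv]; rfl

lemma fderiv_restrictTri {g : Tri n → ℝ} (hg : Sm g) (x v a u : Fin n → ℝ) :
    fderiv ℝ (fun a' => g (x, v, a')) a u = fderiv ℝ g (x, v, a) (0, 0, u) := by
  have he : HasFDerivAt (fun a' : Fin n → ℝ => ((x, v, a') : Tri n))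
      ((0 : (Fin n → ℝ) →L[ℝ] (Fin n → ℝ)).prod
        ((0 : (Fin n → ℝ) →L[ℝ] (Fin n → ℝ)).prod (ContinuousLinearMap.id ℝ _))) a :=
    HasFDerivAt.prodMk (hasFDerivAt_const x a) (HasFDerivAt.prodMk (hasFDerivAt_const v a) (hasFDerivAt_id a))
  have h2 : HasFDerivAt (fun a' : Fin n → ℝ => g (x, v, a'))
      ((fderiv ℝ g (x, v, a)).comp
        ((0 : (Fin n → ℝ) →L[ℝ] (Fin n → ℝ)).prod
          ((0 : (Fin n → ℝ) →L[ℝ] (Fin n → ℝ)).prod (ContinuousLinearMap.id ℝ _)))) a :=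
    (hg.diffAt _).hasFDerivAt.comp a he
  rw [h2.fderiv]; rfl

/-- Master lemma: third ε-derivative of `Dt (Dt Y)` when all first ε-derivatives of `Y`
are lifts. -/
lemma master {Y : Jet n → ℝ} (hY : Sm Y) (ρ : Fin n → Tri n → ℝ)
    (hρS : ∀ m, Sm (ρ m)) (hρ : ∀ m, dd (ed m) Y = ELQ.lift (ρ m)) (i j l : Fin n) :
    dd (ed l) (dd (ed j) (dd (ed i) (_root_.Dt (_root_.Dt Y)))) =
      ELQ.lift (fun p =>
        dd (ia l) (dd (ia j) (ρ i)) p + dd (ia j) (dd (ia l) (ρ i)) p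
        + dd (ia l) (dd (ia i) (ρ j)) p + dd (ia j) (dd (ia i) (ρ l)) p
        + dd (ia i) (dd (ia l) (ρ j)) p + dd (ia i) (dd (ia j) (ρ l)) p) := by
  have step2 : ∀ m : Fin n, dd (ed m) (_root_.Dt Y)
      = fun q => _root_.Dt (ELQ.lift (ρ m)) q + dd (ad m) Y q := by
    intro m
    rw [dd_Dt hY, piL_ed, hρ m]
  have step1 : dd (ed i) (_root_.Dt (_root_.Dt Y))
      = fun q => _root_.Dt (_root_.Dt (ELQ.lift (ρ i))) q
          + _root_.Dt (dd (ad i) Y) q + dd (ad i) (_root_.Dt Y) q := by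
    rw [dd_Dt hY.Dt, piL_ed, step2 i,
      Dt_add ((hρS i).lift.Dt) (hY.dd (ad i))]
  -- second ε-derivative: six summands
  have step3a : dd (ed j) (_root_.Dt (_root_.Dt (ELQ.lift (ρ i))))
      = fun q => _root_.Dt (ELQ.lift (dd (ia j) (ρ i))) q
          + dd (ad j) (_root_.Dt (ELQ.lift (ρ i))) q := by
    rw [dd_Dt (hρS i).lift.Dt, piL_ed, P2 (hρS i) j]
  have step3b : dd (ed j) (_root_.Dt (dd (ad i) Y))
      = fun q => _root_.Dt (ELQ.lift (dd (ia i) (ρ j))) q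
          + dd (ad j) (dd (ad i) Y) q := by
    rw [dd_Dt (hY.dd (ad i)), piL_ed, dd_swap hY (ed j) (ad i), hρ j,
      dd_ad_lift (hρS j) i]
  have step3c : dd (ed j) (dd (ad i) (_root_.Dt Y))
      = fun q => dd (ad i) (_root_.Dt (ELQ.lift (ρ j))) q
          + dd (ad i) (dd (ad j) Y) q := by
    rw [dd_swap hY.Dt (ed j) (ad i), step2 j]
    exact dd_add (hρS j).lift.Dt (hY.dd (ad j)) (ad i)
  have step3 : dd (ed j) (dd (ed i) (_root_.Dt (_root_.Dt Y)))
      = fun q => _root_.Dt (ELQ.lift (dd (ia j) (ρ i))) q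
          + dd (ad j) (_root_.Dt (ELQ.lift (ρ i))) q
          + _root_.Dt (ELQ.lift (dd (ia i) (ρ j))) q
          + dd (ad j) (dd (ad i) Y) q
          + dd (ad i) (_root_.Dt (ELQ.lift (ρ j))) q
          + dd (ad i) (dd (ad j) Y) q := by
    rw [step1, dd_add3 ((hρS i).lift.Dt.Dt) ((hY.dd (ad i)).Dt) (hY.Dt.dd (ad i)),
      step3a, step3b, step3c]
    funext q; ring
  -- third ε-derivative
  have u1 : dd (ed l) (_root_.Dt (ELQ.lift (dd (ia j) (ρ i))))
      = ELQ.lift (dd (ia l) (dd (ia j) (ρ i))) := P2 ((hρS i).dd _) l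
  have u2 : dd (ed l) (dd (ad j) (_root_.Dt (ELQ.lift (ρ i))))
      = ELQ.lift (dd (ia j) (dd (ia l) (ρ i))) := by
    rw [dd_swap (hρS i).lift.Dt (ed l) (ad j), P2 (hρS i) l,
      dd_ad_lift ((hρS i).dd _) j]
  have u3 : dd (ed l) (_root_.Dt (ELQ.lift (dd (ia i) (ρ j))))
      = ELQ.lift (dd (ia l) (dd (ia i) (ρ j))) := P2 ((hρS j).dd _) l
  have u4 : dd (ed l) (dd (ad j) (dd (ad i) Y))
      = ELQ.lift (dd (ia j) (dd (ia i) (ρ l))) := by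
    rw [dd_swap (hY.dd (ad i)) (ed l) (ad j), dd_swap hY (ed l) (ad i), hρ l,
      dd_ad_lift (hρS l) i, dd_ad_lift ((hρS l).dd _) j]
  have u5 : dd (ed l) (dd (ad i) (_root_.Dt (ELQ.lift (ρ j))))
      = ELQ.lift (dd (ia i) (dd (ia l) (ρ j))) := by
    rw [dd_swap (hρS j).lift.Dt (ed l) (ad i), P2 (hρS j) l,
      dd_ad_lift ((hρS j).dd _) i]
  have u6 : dd (ed l) (dd (ad i) (dd (ad j) Y))
      = ELQ.lift (dd (ia i) (dd (ia j) (ρ l))) := by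
    rw [dd_swap (hY.dd (ad j)) (ed l) (ad i), dd_swap hY (ed l) (ad j), hρ l,
      dd_ad_lift (hρS l) j, dd_ad_lift ((hρS l).dd _) i]
  rw [step3,
    dd_add6 ((hρS i).dd _).lift.Dt ((hρS i).lift.Dt.dd _) ((hρS j).dd _).lift.Dt
      ((hY.dd _).dd _) ((hρS j).lift.Dt.dd _) ((hY.dd _).dd _) (ed l),
    u1, u2, u3, u4, u5, u6]
  rfl

end jet
end ELQ

/-- if `L = F + Σ_s x⃛^s λ_s(x,ẋ,ẍ)` is affine in `x⃛` with
`∂λ_s/∂ẍ^i = ∂λ_i/∂ẍ^s`, then the Euler–Lagrange expression restricted to third-order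
jets is polynomial of degree at most 2 in `x⃛`: all its third partials in the
`x⃛`-variables vanish. -/
theorem EL_quadratic_in_third_jets
    (F : (Fin n → ℝ) → (Fin n → ℝ) → (Fin n → ℝ) → ℝ)
    (lam : (Fin n → ℝ) → (Fin n → ℝ) → (Fin n → ℝ) → Fin n → ℝ)
    (hF : ContDiff ℝ (⊤ : ℕ∞) fun p : (Fin n → ℝ) × (Fin n → ℝ) × (Fin n → ℝ) => F p.1 p.2.1 p.2.2)
    (hlam : ∀ s, ContDiff ℝ (⊤ : ℕ∞)
      fun p : (Fin n → ℝ) × (Fin n → ℝ) × (Fin n → ℝ) => lam p.1 p.2.1 p.2.2 s)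
    (hsym : ∀ x v a i s,
      fderiv ℝ (fun a' => lam x v a' s) a (Pi.single i 1)
        = fderiv ℝ (fun a' => lam x v a' i) a (Pi.single s 1))
    (L : Jet n → ℝ)
    (hL : L = fun q => F q.1 q.2.1 q.2.2.1 + ∑ s, q.2.2.2 s * lam q.1 q.2.1 q.2.2.1 s) :
    ∀ (x v a bb : Fin n → ℝ) (k i j l : Fin n),
      fderiv ℝ (fun b1 =>
        fderiv ℝ (fun b2 =>
          fderiv ℝ (fun b3 => ELop L (x, v, a, b3) k) b2 (Pi.single i 1))
        b1 (Pi.single j 1)) bb (Pi.single l 1) = 0 := by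
  intro x v a bb k i j l
  have hΛS : ∀ s, ELQ.Sm (ELQ.Lam lam s) := fun s => hlam s
  have hsymT : ∀ m s : Fin n, ELQ.dd (ELQ.ia m) (ELQ.Lam lam s)
      = ELQ.dd (ELQ.ia s) (ELQ.Lam lam m) := by
    intro m s
    funext p
    calc ELQ.dd (ELQ.ia m) (ELQ.Lam lam s) p
        = fderiv ℝ (fun a' => lam p.1 p.2.1 a' s) p.2.2 (Pi.single m 1) :=
          (ELQ.fderiv_restrictTri (hΛS s) p.1 p.2.1 p.2.2 (Pi.single m 1)).symm
      _ = fderiv ℝ (fun a' => lam p.1 p.2.1 a' m) p.2.2 (Pi.single s 1) :=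
          hsym p.1 p.2.1 p.2.2 m s
      _ = ELQ.dd (ELQ.ia s) (ELQ.Lam lam m) p :=
          ELQ.fderiv_restrictTri (hΛS m) p.1 p.2.1 p.2.2 (Pi.single s 1)
  have hL' : L = fun q : Jet n => ELQ.lift (fun p : ELQ.Tri n => F p.1 p.2.1 p.2.2) q
      + ∑ s, ELQ.cp s q * ELQ.lift (ELQ.Lam lam s) q := hL
  have hLS : ELQ.Sm L := by
    rw [hL']
    exact (ELQ.Sm.lift hF).add
      (ContDiff.sum fun s _ => ((ELQ.cp s).contDiff).mul (ELQ.Sm.lift (hlam s)))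
  have hddL : ∀ m, ELQ.dd (ELQ.ed m) L = ELQ.lift (ELQ.Lam lam m) := by
    intro m
    funext q
    have hFe : HasFDerivAt
        (fun q : Jet n => ELQ.lift (fun p : ELQ.Tri n => F p.1 p.2.1 p.2.2) q)
        ((fderiv ℝ (fun p : ELQ.Tri n => F p.1 p.2.1 p.2.2) (ELQ.P q)).comp
          (ELQ.P : Jet n →L[ℝ] ELQ.Tri n)) q :=
      ((hF.contDiffAt.differentiableAt (by simp)).hasFDerivAt).comp q
        (ELQ.P : Jet n →L[ℝ] ELQ.Tri n).hasFDerivAt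
    have hm : ∀ s : Fin n, HasFDerivAt
        (fun q : Jet n => ELQ.cp s q * ELQ.lift (ELQ.Lam lam s) q)
        (ELQ.cp s q • ((fderiv ℝ (ELQ.Lam lam s) (ELQ.P q)).comp
            (ELQ.P : Jet n →L[ℝ] ELQ.Tri n))
          + ELQ.lift (ELQ.Lam lam s) q • ELQ.cp s) q := fun s =>
      ((ELQ.cp s).hasFDerivAt).mul
        (((hlam s).contDiffAt.differentiableAt (by simp)).hasFDerivAt.comp q
          (ELQ.P : Jet n →L[ℝ] ELQ.Tri n).hasFDerivAt)
    have htot := hFe.fun_add (HasFDerivAt.fun_sum (fun s (_ : s ∈ Finset.univ) => hm s))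
    rw [hL']
    show fderiv ℝ _ q (ELQ.ed m) = ELQ.Lam lam m (ELQ.P q)
    rw [htot.fderiv]
    have hP0 : (ELQ.P : Jet n →L[ℝ] ELQ.Tri n) (ELQ.ed m) = 0 := rfl
    have hcp : ∀ s : Fin n, ELQ.cp s (ELQ.ed m) = (Pi.single m 1 : Fin n → ℝ) s := fun s => rfl
    simp only [ContinuousLinearMap.add_apply, ContinuousLinearMap.coe_comp',
      Function.comp_apply, ContinuousLinearMap.coe_sum', Finset.sum_apply,
      ContinuousLinearMap.smul_apply, smul_eq_mul, hP0, map_zero, mul_zero, zero_add, hcp]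
    rw [Finset.sum_eq_single m (fun s _ hs => by
        rw [Pi.single_eq_of_ne hs, mul_zero]) (fun h => absurd (Finset.mem_univ m) h)]
    rw [Pi.single_eq_same, mul_one]
    rfl
  -- smoothness of the four pieces
  have h1S : ELQ.Sm (ELQ.dd (ELQ.xd k) L) := hLS.dd _
  have h2S : ELQ.Sm (Dt (ELQ.dd (ELQ.vd k) L)) := (hLS.dd _).Dt
  have h3S : ELQ.Sm (Dt (Dt (ELQ.dd (ELQ.ad k) L))) := (hLS.dd _).Dt.Dt
  have h4S : ELQ.Sm (Dt (Dt (Dt (ELQ.dd (ELQ.ed k) L)))) := (hLS.dd _).Dt.Dt.Dt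
  -- first piece
  have G1 : ELQ.dd (ELQ.ed l) (ELQ.dd (ELQ.ed j) (ELQ.dd (ELQ.ed i)
      (ELQ.dd (ELQ.xd k) L))) = fun _ => (0:ℝ) := by
    rw [ELQ.dd_swap hLS (ELQ.ed i) (ELQ.xd k), hddL i, ELQ.dd_lift (hΛS i),
      ELQ.dd_ed_lift ((hΛS i).dd _) j, ELQ.dd_zero_fun]
  -- second piece
  have G2 : ELQ.dd (ELQ.ed l) (ELQ.dd (ELQ.ed j) (ELQ.dd (ELQ.ed i)
      (Dt (ELQ.dd (ELQ.vd k) L)))) = fun _ => (0:ℝ) := by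
    have s1 : ELQ.dd (ELQ.ed i) (Dt (ELQ.dd (ELQ.vd k) L))
        = fun q => Dt (ELQ.lift (ELQ.dd (ELQ.P (ELQ.vd k)) (ELQ.Lam lam i))) q
            + ELQ.dd (ELQ.ad i) (ELQ.dd (ELQ.vd k) L) q := by
      rw [ELQ.dd_Dt (hLS.dd (ELQ.vd k)), ELQ.piL_ed,
        ELQ.dd_swap hLS (ELQ.ed i) (ELQ.vd k), hddL i, ELQ.dd_lift (hΛS i)]
    have s2a : ELQ.dd (ELQ.ed j) (Dt (ELQ.lift (ELQ.dd (ELQ.P (ELQ.vd k)) (ELQ.Lam lam i))))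
        = ELQ.lift (ELQ.dd (ELQ.ia j) (ELQ.dd (ELQ.P (ELQ.vd k)) (ELQ.Lam lam i))) :=
      ELQ.P2 ((hΛS i).dd _) j
    have s2b : ELQ.dd (ELQ.ed j) (ELQ.dd (ELQ.ad i) (ELQ.dd (ELQ.vd k) L))
        = ELQ.lift (ELQ.dd (ELQ.ia i) (ELQ.dd (ELQ.P (ELQ.vd k)) (ELQ.Lam lam j))) := by
      rw [ELQ.dd_swap (hLS.dd (ELQ.vd k)) (ELQ.ed j) (ELQ.ad i),
        ELQ.dd_swap hLS (ELQ.ed j) (ELQ.vd k), hddL j, ELQ.dd_lift (hΛS j),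
        ELQ.dd_ad_lift ((hΛS j).dd _) i]
    rw [s1, ELQ.dd_add (((hΛS i).dd _).lift.Dt) ((hLS.dd (ELQ.vd k)).dd (ELQ.ad i)) (ELQ.ed j),
      s2a, s2b,
      ELQ.dd_add (((hΛS i).dd _).dd _).lift ((((hΛS j).dd _).dd _).lift) (ELQ.ed l),
      ELQ.dd_ed_lift (((hΛS i).dd _).dd _) l, ELQ.dd_ed_lift (((hΛS j).dd _).dd _) l]
    funext q; simp
  -- third and fourth pieces via the master lemma
  have hY3ρ : ∀ m, ELQ.dd (ELQ.ed m) (ELQ.dd (ELQ.ad k) L)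
      = ELQ.lift (ELQ.dd (ELQ.ia k) (ELQ.Lam lam m)) := by
    intro m
    rw [ELQ.dd_swap hLS (ELQ.ed m) (ELQ.ad k), hddL m, ELQ.dd_ad_lift (hΛS m) k]
  have G3 := ELQ.master (hLS.dd (ELQ.ad k)) (fun m => ELQ.dd (ELQ.ia k) (ELQ.Lam lam m))
    (fun m => (hΛS m).dd _) hY3ρ i j l
  have hY4ρ : ∀ m, ELQ.dd (ELQ.ed m) (Dt (ELQ.lift (ELQ.Lam lam k)))
      = ELQ.lift (ELQ.dd (ELQ.ia m) (ELQ.Lam lam k)) := fun m => ELQ.P2 (hΛS k) m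
  have G4 := ELQ.master ((hΛS k).lift.Dt) (fun m => ELQ.dd (ELQ.ia m) (ELQ.Lam lam k))
    (fun m => (hΛS k).dd _) hY4ρ i j l
  have hρeq : ∀ m, ELQ.dd (ELQ.ia k) (ELQ.Lam lam m)
      = ELQ.dd (ELQ.ia m) (ELQ.Lam lam k) := fun m => hsymT k m
  rw [hρeq i, hρeq j, hρeq l] at G3
  -- assembly
  have hEL : (fun q => ELop L q k) = fun q => ELQ.dd (ELQ.xd k) L q
      - Dt (ELQ.dd (ELQ.vd k) L) q + Dt (Dt (ELQ.dd (ELQ.ad k) L)) q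
      - Dt (Dt (Dt (ELQ.dd (ELQ.ed k) L))) q := rfl
  have hELS : ELQ.Sm (fun q => ELop L q k) := by
    rw [hEL]; exact ((h1S.sub h2S).add h3S).sub h4S
  have D1 : ELQ.dd (ELQ.ed i) (fun q => ELop L q k)
      = fun q => ELQ.dd (ELQ.ed i) (ELQ.dd (ELQ.xd k) L) q
          - ELQ.dd (ELQ.ed i) (Dt (ELQ.dd (ELQ.vd k) L)) q
          + ELQ.dd (ELQ.ed i) (Dt (Dt (ELQ.dd (ELQ.ad k) L))) q
          - ELQ.dd (ELQ.ed i) (Dt (Dt (Dt (ELQ.dd (ELQ.ed k) L)))) q := by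
    rw [hEL]; exact ELQ.dd_comb4 h1S h2S h3S h4S (ELQ.ed i)
  have D2 : ELQ.dd (ELQ.ed j) (ELQ.dd (ELQ.ed i) (fun q => ELop L q k))
      = fun q => ELQ.dd (ELQ.ed j) (ELQ.dd (ELQ.ed i) (ELQ.dd (ELQ.xd k) L)) q
          - ELQ.dd (ELQ.ed j) (ELQ.dd (ELQ.ed i) (Dt (ELQ.dd (ELQ.vd k) L))) q
          + ELQ.dd (ELQ.ed j) (ELQ.dd (ELQ.ed i) (Dt (Dt (ELQ.dd (ELQ.ad k) L)))) q
          - ELQ.dd (ELQ.ed j) (ELQ.dd (ELQ.ed i) (Dt (Dt (Dt (ELQ.dd (ELQ.ed k) L))))) q := by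
    rw [D1]
    exact ELQ.dd_comb4 (h1S.dd _) (h2S.dd _) (h3S.dd _) (h4S.dd _) (ELQ.ed j)
  have D3 : ELQ.dd (ELQ.ed l) (ELQ.dd (ELQ.ed j) (ELQ.dd (ELQ.ed i) (fun q => ELop L q k)))
      = fun q => ELQ.dd (ELQ.ed l) (ELQ.dd (ELQ.ed j) (ELQ.dd (ELQ.ed i)
            (ELQ.dd (ELQ.xd k) L))) q
          - ELQ.dd (ELQ.ed l) (ELQ.dd (ELQ.ed j) (ELQ.dd (ELQ.ed i)
            (Dt (ELQ.dd (ELQ.vd k) L)))) q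
          + ELQ.dd (ELQ.ed l) (ELQ.dd (ELQ.ed j) (ELQ.dd (ELQ.ed i)
            (Dt (Dt (ELQ.dd (ELQ.ad k) L))))) q
          - ELQ.dd (ELQ.ed l) (ELQ.dd (ELQ.ed j) (ELQ.dd (ELQ.ed i)
            (Dt (Dt (Dt (ELQ.dd (ELQ.ed k) L)))))) q := by
    rw [D2]
    exact ELQ.dd_comb4 ((h1S.dd _).dd _) ((h2S.dd _).dd _) ((h3S.dd _).dd _)
      ((h4S.dd _).dd _) (ELQ.ed l)
  have final : ELQ.dd (ELQ.ed l) (ELQ.dd (ELQ.ed j) (ELQ.dd (ELQ.ed i)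
      (fun q => ELop L q k))) = fun _ => (0:ℝ) := by
    rw [D3, G1, G2, hddL k, G3, G4]
    funext q; simp
  -- reduce the restricted derivatives to jet-level derivatives
  have r1 : ∀ b2 : Fin n → ℝ, fderiv ℝ (fun b3 => ELop L (x, v, a, b3) k) b2 (Pi.single i 1)
      = ELQ.dd (ELQ.ed i) (fun q => ELop L q k) (x, v, a, b2) :=
    fun b2 => ELQ.fderiv_restrict hELS x v a b2 (Pi.single i 1)
  simp only [r1]
  have r2 : ∀ b1 : Fin n → ℝ,
      fderiv ℝ (fun b2 => ELQ.dd (ELQ.ed i) (fun q => ELop L q k) (x, v, a, b2)) b1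
        (Pi.single j 1)
      = ELQ.dd (ELQ.ed j) (ELQ.dd (ELQ.ed i) (fun q => ELop L q k)) (x, v, a, b1) :=
    fun b1 => ELQ.fderiv_restrict (hELS.dd _) x v a b1 (Pi.single j 1)
  simp only [r2]
  have r3 : fderiv ℝ (fun b1 => ELQ.dd (ELQ.ed j) (ELQ.dd (ELQ.ed i)
        (fun q => ELop L q k)) (x, v, a, b1)) bb (Pi.single l 1)
      = ELQ.dd (ELQ.ed l) (ELQ.dd (ELQ.ed j) (ELQ.dd (ELQ.ed i)
        (fun q => ELop L q k))) (x, v, a, bb) :=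
    ELQ.fderiv_restrict ((hELS.dd _).dd _) x v a bb (Pi.single l 1)
  rw [r3, final]
end
end
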